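/- arXiv:2205.14279 — 3 statements merged into one kernel-verified Lean document; each statement's English description precedes it below -/
import Mathlib

section
/- Let φ: (A,m) → (B,n) be a local homomorphism of noetherian local rings and I ⊂ A a proper ideal. Then rd(π_I) ≥ rd(π_{IB}), where π_I: A → A/I and π_{IB}: B → B/IB are the canonical surjections. Moreover, φ is basically regular if and only if rd(π_I) = rd(π_{IB}) for every proper ideal I of A. -/
/-!
Write `V = m/m²`, `W = n/n²` and `g : V → W` for the map induced by `φ`; it is semilinear over
the residue field extension `K → L`. For a surjection `π : A → A'` the cotangent map is onto, so
rank–nullity gives `rd π = edim A - edim A'`, which for `π_I` is `δ(I) = dim_K U_I`, where `U_I`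
is the image of `I` in `V`. The image of `IB` in `W` is the `L`-span of `g(U_I)`, hence
`rd π_{IB} = dim_L span_L g(U_I) ≤ dim_K U_I = rd π_I`. Splitting `V = U ⊕ U'` shows that equality
holds for every subspace `U` as soon as it holds for `U = V`, i.e. as soon as `g` maps a basis of
`V` to an `L`-independent family; by Nakayama this is basic regularity.
-/

open IsLocalRing

section Prelim

variable {A : Type*} [CommRing A] [IsLocalRing A]
variable {B : Type*} [CommRing B] [IsLocalRing B]

/-- The embedding dimension of a local ring: `dim_K m/m²`. -/
noncomputable def edim (A : Type*) [CommRing A] [IsLocalRing A] : ℕ :=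
  Module.finrank (ResidueField A) (CotangentSpace A)

/-- `δ_A(I) = dim_K (I + m²)/m²`, realized as the dimension of the image of `I` in `m/m²`. -/
noncomputable def delta (I : Ideal A) : ℕ :=
  Module.finrank (ResidueField A)
    (Submodule.span (ResidueField A)
      ((maximalIdeal A).toCotangent '' {x : maximalIdeal A | (x : A) ∈ I}))

/-- `x₁, …, x_r ∈ I` form part of a minimal basis of `I`: their images in `I/mI` are
linearly independent over the residue field. -/
def IsPartOfMinBasis {r : ℕ} (I : Ideal A) (x : Fin r → A) : Prop :=
  (∀ i, x i ∈ I) ∧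
    ∀ c : Fin r → A, (∑ i, c i * x i) ∈ maximalIdeal A * I → ∀ i, c i ∈ maximalIdeal A

/-- `x₁, …, x_r` form a minimal basis (minimal generating set) of `I`. -/
def IsMinBasis {r : ℕ} (I : Ideal A) (x : Fin r → A) : Prop :=
  IsPartOfMinBasis I x ∧ Ideal.span (Set.range x) = I

theorem map_mem_maximalIdeal (φ : A →+* B) [IsLocalHom φ] {a : A}
    (ha : a ∈ maximalIdeal A) : φ a ∈ maximalIdeal B :=
  fun h => ha (IsLocalHom.map_nonunit a h)

/-- The map `m/m² → n/n²` induced by a local homomorphism, as a `ℤ`-linear map. -/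
noncomputable def gmap (φ : A →+* B) [IsLocalHom φ] :
    (maximalIdeal A).Cotangent →ₗ[ℤ] (maximalIdeal B).Cotangent :=
  Ideal.mapCotangent (R := ℤ) (maximalIdeal A) (maximalIdeal B) φ.toIntAlgHom
    (fun _ ha => map_mem_maximalIdeal φ ha)

/-- The natural `K`-linear map `m/m² → n/n²` induced by a local homomorphism, where `n/n²` is
viewed as a `K`-vector space via the induced map of residue fields `K → L`. -/
noncomputable def cotangentMap (φ : A →+* B) [IsLocalHom φ] :
    letI : Module (ResidueField A) (CotangentSpace B) :=
      Module.compHom _ (ResidueField.map φ)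
    CotangentSpace A →ₗ[ResidueField A] CotangentSpace B :=
  letI : Module (ResidueField A) (CotangentSpace B) :=
    Module.compHom _ (ResidueField.map φ)
  { toFun := gmap φ
    map_add' := fun x y => map_add (gmap φ) x y
    map_smul' := by
      intro k x
      obtain ⟨a, rfl⟩ := IsLocalRing.residue_surjective k
      obtain ⟨m, rfl⟩ := Ideal.toCotangent_surjective _ x
      show gmap φ ((residue A a) • (maximalIdeal A).toCotangent m) =
        (ResidueField.map φ (residue A a)) • gmap φ ((maximalIdeal A).toCotangent m)
      rw [ResidueField.map_residue]
      have h1 : (residue A a) • (maximalIdeal A).toCotangent m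
          = (maximalIdeal A).toCotangent (a • m) := rfl
      have h2 : (residue B (φ a)) • (maximalIdeal B).toCotangent
            ⟨φ m, map_mem_maximalIdeal φ m.2⟩
          = (maximalIdeal B).toCotangent
            ((φ a) • ⟨φ m, map_mem_maximalIdeal φ m.2⟩) := rfl
      have h3 : gmap φ ((maximalIdeal A).toCotangent m) =
          (maximalIdeal B).toCotangent ⟨φ m, map_mem_maximalIdeal φ m.2⟩ :=
        Ideal.mapCotangent_toCotangent _ _ _ _ m
      have h4 : gmap φ ((maximalIdeal A).toCotangent (a • m)) =
          (maximalIdeal B).toCotangent ⟨φ (a • m), map_mem_maximalIdeal φ (a • m).2⟩ :=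
        Ideal.mapCotangent_toCotangent _ _ _ _ (a • m)
      rw [h1, h4, h3, h2]
      congr 1
      ext
      exact map_mul φ a m }

/-- The regularity defect `rd(φ)`: the nullity (dimension over `L` of the kernel) of the
natural `L`-linear map `L ⊗_K m/m² → n/n²` induced by `φ`. -/
noncomputable def rd (φ : A →+* B) [IsLocalHom φ] : ℕ :=
  letI : Algebra (ResidueField A) (ResidueField B) := (ResidueField.map φ).toAlgebra
  letI : Module (ResidueField A) (CotangentSpace B) :=
    Module.compHom _ (ResidueField.map φ)
  letI : IsScalarTower (ResidueField A) (ResidueField B) (CotangentSpace B) :=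
    IsScalarTower.of_algebraMap_smul fun _ _ => rfl
  Module.finrank (ResidueField B)
    (LinearMap.ker (LinearMap.liftBaseChange (ResidueField B) (cotangentMap φ)))

/-- `φ` is basically regular: every minimal basis of `m` is mapped by `φ` to part of a
minimal basis of `n`. -/
def BasicallyRegular (φ : A →+* B) : Prop :=
  ∀ (r : ℕ) (x : Fin r → A), IsMinBasis (maximalIdeal A) x →
    IsPartOfMinBasis (maximalIdeal B) (fun i => φ (x i))

instance quotIsLocalRing (I : Ideal A) [Nontrivial (A ⧸ I)] : IsLocalRing (A ⧸ I) :=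
  IsLocalRing.of_surjective' _ Ideal.Quotient.mk_surjective

instance quotMkIsLocalHom (I : Ideal A) [Nontrivial (A ⧸ I)] :
    IsLocalHom (Ideal.Quotient.mk I) :=
  IsLocalHom.of_surjective _ Ideal.Quotient.mk_surjective

instance mapQuotNontrivial (φ : A →+* B) [IsLocalHom φ] (I : Ideal A) [Nontrivial (A ⧸ I)] :
    Nontrivial (B ⧸ I.map φ) := by
  refine Ideal.Quotient.nontrivial_iff.mpr fun h => ?_
  have hI : I ≠ ⊤ := by
    intro hI
    exact one_ne_zero ((Ideal.Quotient.eq_zero_iff_mem.mpr (hI ▸ Submodule.mem_top)).symm.trans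
      (map_one (Ideal.Quotient.mk I))).symm
  have hle : I.map φ ≤ maximalIdeal B := by
    rw [Ideal.map_le_iff_le_comap]
    exact fun a ha => map_mem_maximalIdeal φ (IsLocalRing.le_maximalIdeal hI ha)
  exact (maximalIdeal.isMaximal B).ne_top (top_le_iff.mp (h ▸ hle))

instance quotientMapIsLocalHom (φ : A →+* B) [IsLocalHom φ] {I : Ideal A} {J : Ideal B}
    {h : I ≤ J.comap φ} [Nontrivial (B ⧸ J)] :
    IsLocalHom (Ideal.quotientMap J φ h) := by
  constructor
  intro x hx
  obtain ⟨a, rfl⟩ := Ideal.Quotient.mk_surjective x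
  rw [Ideal.quotientMap_mk] at hx
  exact ((IsLocalHom.map_nonunit a (IsLocalHom.map_nonunit (φ a) hx))).map
    (Ideal.Quotient.mk I)

instance maxPowQuotNontrivial : Nontrivial (B ⧸ (maximalIdeal B) ^ 2) :=
  Ideal.Quotient.nontrivial_iff.mpr fun h =>
    (maximalIdeal.isMaximal B).ne_top (top_le_iff.mp (h ▸ Ideal.pow_le_self two_ne_zero))

/-- A local ring is regular when its Krull dimension equals its embedding dimension. -/
def IsRegularLocal (A : Type*) [CommRing A] [IsLocalRing A] : Prop :=
  ringKrullDim A = (edim A : WithBot (WithTop ℕ))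

end Prelim

variable {A : Type*} [CommRing A] [IsLocalRing A] [IsNoetherianRing A]
variable {B : Type*} [CommRing B] [IsLocalRing B] [IsNoetherianRing B]

open Submodule

section SemilinearSpan

variable {K L : Type*} [Field K] [Field L] {σ : K →+* L}
variable {V W : Type*} [AddCommGroup V] [Module K V] [AddCommGroup W] [Module L W]

theorem Submodule.span_image_span (g : V →ₛₗ[σ] W) (s : Set V) :
    span L (g '' span K s) = span L (g '' s) := by
  refine le_antisymm ?_ (span_mono (Set.image_mono subset_span))
  rw [span_le]
  rintro _ ⟨v, hv, rfl⟩
  induction hv using span_induction with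
  | mem x h => exact subset_span (Set.mem_image_of_mem _ h)
  | zero => simp
  | add x y _ _ hx hy => rw [map_add]; exact add_mem hx hy
  | smul k x _ hx => rw [map_smulₛₗ]; exact smul_mem _ _ hx

theorem Submodule.span_image_eq_span_range_finBasis [FiniteDimensional K V] (g : V →ₛₗ[σ] W)
    (U : Submodule K V) :
    span L (g '' U) = span L (Set.range fun i => g (Module.finBasis K U i)) := by
  have hU : span K (Set.range fun i => (Module.finBasis K U i : V)) = U := by
    rw [Set.range_comp' Subtype.val, ← U.coe_subtype, ← map_span, (Module.finBasis K U).span_eq,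
      map_top, range_subtype]
  conv_lhs => rw [← hU, span_image_span, ← Set.range_comp]
  rfl

instance [FiniteDimensional K V] (g : V →ₛₗ[σ] W) (U : Submodule K V) :
    FiniteDimensional L (span L (g '' U)) := by
  rw [span_image_eq_span_range_finBasis]
  exact FiniteDimensional.span_of_finite L (Set.finite_range _)

theorem Submodule.finrank_span_image_le [FiniteDimensional K V] (g : V →ₛₗ[σ] W)
    (U : Submodule K V) : Module.finrank L (span L (g '' U)) ≤ Module.finrank K U := by
  rw [span_image_eq_span_range_finBasis]
  simpa [Set.finrank] using finrank_range_le_card (R := L) fun i => g (Module.finBasis K U i)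

theorem Submodule.finrank_span_image_eq [FiniteDimensional K V] (g : V →ₛₗ[σ] W)
    (hg : Module.finrank L (span L (Set.range g)) = Module.finrank K V) (U : Submodule K V) :
    Module.finrank L (span L (g '' U)) = Module.finrank K U := by
  obtain ⟨U', hU⟩ := exists_isCompl U
  have hsup : span L (Set.range g) = span L (g '' U) ⊔ span L (g '' U') := by
    rw [← span_union, ← Set.image_union, ← span_image_span, span_union, span_eq, span_eq,
      hU.sup_eq_top, top_coe, Set.image_univ]
  have hle := finrank_add_le_finrank_add_finrank (span L (g '' U)) (span L (g '' U'))
  rw [← hsup, hg, ← finrank_add_eq_of_isCompl hU] at hle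
  have := finrank_span_image_le g U
  have := finrank_span_image_le g U'
  omega

theorem LinearMap.linearIndependent_comp_iff_finrank_span_range {ι : Type*} [Fintype ι]
    (g : V →ₛₗ[σ] W) {w : ι → V} (hw : span K (Set.range w) = ⊤) :
    LinearIndependent L (g ∘ w) ↔ Module.finrank L (span L (Set.range g)) = Fintype.card ι := by
  rw [linearIndependent_iff_card_eq_finrank_span, Set.finrank, Set.range_comp, ← span_image_span,
    hw, top_coe, Set.image_univ, eq_comm]

end SemilinearSpan

section LocalRing

variable {R S : Type*} [CommRing R] [IsLocalRing R] [CommRing S] [IsLocalRing S]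

theorem ResidueField.map_surjective (φ : R →+* S) [IsLocalHom φ] (hφ : Function.Surjective φ) :
    Function.Surjective (ResidueField.map φ) := by
  intro y
  obtain ⟨b, rfl⟩ := residue_surjective y
  obtain ⟨a, rfl⟩ := hφ b
  exact ⟨residue R a, ResidueField.map_residue φ a⟩

noncomputable def cotangentMapₛₗ (φ : R →+* S) [IsLocalHom φ] :
    CotangentSpace R →ₛₗ[ResidueField.map φ] CotangentSpace S where
  toFun := gmap φ
  map_add' := map_add (gmap φ)
  map_smul' := by
    let := Module.compHom (CotangentSpace S) (ResidueField.map φ)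
    exact (cotangentMap φ).map_smul

theorem cotangentMapₛₗ_toCotangent (φ : R →+* S) [IsLocalHom φ] (x : maximalIdeal R) :
    cotangentMapₛₗ φ ((maximalIdeal R).toCotangent x) =
      (maximalIdeal S).toCotangent ⟨φ x, map_mem_maximalIdeal φ x.2⟩ :=
  rfl

theorem cotangentMapₛₗ_surjective (φ : R →+* S) [IsLocalHom φ] (hφ : Function.Surjective φ) :
    Function.Surjective (cotangentMapₛₗ φ) := by
  intro w
  obtain ⟨y, rfl⟩ := Ideal.toCotangent_surjective _ w
  obtain ⟨x, hx⟩ := hφ y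
  have hxm : x ∈ maximalIdeal R := by
    rw [← maximalIdeal_comap φ, Ideal.mem_comap, hx]
    exact y.2
  refine ⟨(maximalIdeal R).toCotangent ⟨x, hxm⟩, ?_⟩
  rw [cotangentMapₛₗ_toCotangent]
  exact congrArg _ (Subtype.ext hx)

theorem rd_add_edim_of_surjective [IsNoetherianRing R] (φ : R →+* S) [IsLocalHom φ]
    (hφ : Function.Surjective φ) : rd φ + edim S = edim R := by
  let : Algebra (ResidueField R) (ResidueField S) := (ResidueField.map φ).toAlgebra
  let : Module (ResidueField R) (CotangentSpace S) := Module.compHom _ (ResidueField.map φ)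
  let : IsScalarTower (ResidueField R) (ResidueField S) (CotangentSpace S) :=
    IsScalarTower.of_algebraMap_smul fun _ _ => rfl
  have hrange :
      LinearMap.range (LinearMap.liftBaseChange (ResidueField S) (cotangentMap φ)) = ⊤ := by
    have hsurj : Function.Surjective (cotangentMap φ) := cotangentMapₛₗ_surjective φ hφ
    rw [LinearMap.range_liftBaseChange, LinearMap.coe_range, hsurj.range_eq, span_univ]
  have := LinearMap.finrank_range_add_finrank_ker
    (LinearMap.liftBaseChange (ResidueField S) (cotangentMap φ))
  rw [hrange, finrank_top, Module.finrank_baseChange] at this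
  rw [rd, edim, edim, ← this, add_comm]

noncomputable def cotangentImage (I : Ideal R) : Submodule (ResidueField R) (CotangentSpace R) :=
  span (ResidueField R) ((maximalIdeal R).toCotangent '' {x | (x : R) ∈ I})

theorem delta_eq_finrank_cotangentImage (I : Ideal R) :
    delta I = Module.finrank (ResidueField R) (cotangentImage I) :=
  rfl

theorem cotangentImage_maximalIdeal : cotangentImage (maximalIdeal R) = ⊤ := by
  refine eq_top_iff.mpr fun v _ => ?_
  obtain ⟨x, rfl⟩ := Ideal.toCotangent_surjective _ v
  exact subset_span ⟨x, x.2, rfl⟩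

theorem ker_cotangentMapₛₗ_mk (I : Ideal R) [Nontrivial (R ⧸ I)] :
    LinearMap.ker (cotangentMapₛₗ (Ideal.Quotient.mk I)) = cotangentImage I := by
  apply le_antisymm
  · intro v hv
    obtain ⟨x, rfl⟩ := Ideal.toCotangent_surjective _ v
    rw [LinearMap.mem_ker, cotangentMapₛₗ_toCotangent, Ideal.toCotangent_eq_zero] at hv
    have hv' : Ideal.Quotient.mk I (x : R) ∈ ((maximalIdeal R) ^ 2).map (Ideal.Quotient.mk I) := by
      rwa [Ideal.map_pow, map_maximalIdeal_of_surjective _ Ideal.Quotient.mk_surjective]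
    obtain ⟨y, hy, hyx⟩ := (Ideal.mem_map_iff_of_surjective _ Ideal.Quotient.mk_surjective).mp hv'
    have hym : y ∈ maximalIdeal R := Ideal.pow_le_self two_ne_zero hy
    have hxy : (x : R) - y ∈ I := Ideal.Quotient.eq.mp hyx.symm
    have hsplit : x = ⟨x - y, sub_mem x.2 hym⟩ + ⟨y, hym⟩ := by ext; simp
    rw [hsplit, map_add, (Ideal.toCotangent_eq_zero _ ⟨y, hym⟩).mpr hy, add_zero]
    exact subset_span ⟨_, hxy, rfl⟩
  · rw [cotangentImage, span_le]
    rintro _ ⟨x, hx, rfl⟩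
    rw [SetLike.mem_coe, LinearMap.mem_ker, cotangentMapₛₗ_toCotangent, Ideal.toCotangent_eq_zero]
    simp [Ideal.Quotient.eq_zero_iff_mem.mpr hx]

theorem delta_add_edim_quotient [IsNoetherianRing R] (I : Ideal R) [Nontrivial (R ⧸ I)] :
    delta I + edim (R ⧸ I) = edim R := by
  let := Module.compHom (CotangentSpace (R ⧸ I)) (ResidueField.map (Ideal.Quotient.mk I))
  have hbij : Function.Bijective (ResidueField.map (Ideal.Quotient.mk I)) :=
    ⟨RingHom.injective _, ResidueField.map_surjective _ Ideal.Quotient.mk_surjective⟩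
  have hfinrank : Module.finrank (ResidueField R) (CotangentSpace (R ⧸ I)) = edim (R ⧸ I) :=
    congrArg Cardinal.toNat (rank_eq_of_equiv_equiv _ (AddEquiv.refl _) hbij fun _ _ => rfl)
  have hsurj : Function.Surjective (cotangentMap (Ideal.Quotient.mk I)) :=
    cotangentMapₛₗ_surjective _ Ideal.Quotient.mk_surjective
  have := LinearMap.finrank_range_add_finrank_ker (cotangentMap (Ideal.Quotient.mk I))
  have hker : LinearMap.ker (cotangentMap (Ideal.Quotient.mk I)) = cotangentImage I :=
    ker_cotangentMapₛₗ_mk I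
  rw [LinearMap.range_eq_top.mpr hsurj, finrank_top, hfinrank, hker] at this
  rw [delta_eq_finrank_cotangentImage, add_comm, this, edim]

theorem rd_mk_eq_delta [IsNoetherianRing R] (I : Ideal R) [Nontrivial (R ⧸ I)] :
    rd (Ideal.Quotient.mk I) = delta I := by
  have := rd_add_edim_of_surjective _ (Ideal.Quotient.mk_surjective (I := I))
  have := delta_add_edim_quotient I
  omega

theorem cotangentImage_map (φ : R →+* S) [IsLocalHom φ] {I : Ideal R}
    (hI : I ≤ maximalIdeal R) :
    cotangentImage (I.map φ) = span (ResidueField S) (cotangentMapₛₗ φ '' cotangentImage I) := by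
  rw [cotangentImage, cotangentImage, span_image_span]
  refine le_antisymm (span_le.mpr ?_) (span_le.mpr ?_)
  · rintro _ ⟨y, hy, rfl⟩
    have hspan : span S ((maximalIdeal S).subtype ⁻¹' (φ '' I)) =
        Submodule.comap (maximalIdeal S).subtype (I.map φ) :=
      span_preimage_eq ⟨0, 0, I.zero_mem, map_zero φ⟩ fun _ ⟨a, ha, hφa⟩ =>
        ⟨⟨φ a, map_mem_maximalIdeal φ (hI ha)⟩, hφa⟩
    have hy' : y ∈ span S ((maximalIdeal S).subtype ⁻¹' (φ '' I)) := hspan ▸ hy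
    clear hy
    induction hy' using span_induction with
    | mem p hp =>
      obtain ⟨a, ha, hpa⟩ := hp
      have : p = ⟨φ a, map_mem_maximalIdeal φ (hI ha)⟩ := Subtype.ext hpa.symm
      rw [this, ← cotangentMapₛₗ_toCotangent φ ⟨a, hI ha⟩]
      exact subset_span ⟨_, ⟨⟨a, hI ha⟩, ha, rfl⟩, rfl⟩
    | zero => simp
    | add p q _ _ hp hq => rw [map_add]; exact add_mem hp hq
    | smul c p _ hp => rw [map_smul]; exact smul_of_tower_mem _ c hp
  · rintro _ ⟨_, ⟨x, hx, rfl⟩, rfl⟩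
    exact subset_span ⟨_, Ideal.mem_map_of_mem φ hx, (cotangentMapₛₗ_toCotangent φ x).symm⟩

theorem rd_mk_map_eq [IsNoetherianRing S] (φ : R →+* S) [IsLocalHom φ] (I : Ideal R)
    [Nontrivial (R ⧸ I)] :
    rd (Ideal.Quotient.mk (I.map φ)) =
      Module.finrank (ResidueField S)
        (span (ResidueField S) (cotangentMapₛₗ φ '' cotangentImage I)) := by
  rw [rd_mk_eq_delta, delta_eq_finrank_cotangentImage,
    cotangentImage_map φ (le_maximalIdeal (Ideal.Quotient.nontrivial_iff.mp ‹_›))]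

theorem isPartOfMinBasis_maximalIdeal_iff {r : ℕ} {x : Fin r → R}
    (hx : ∀ i, x i ∈ maximalIdeal R) :
    IsPartOfMinBasis (maximalIdeal R) x ↔
      LinearIndependent (ResidueField R) fun i => (maximalIdeal R).toCotangent ⟨x i, hx i⟩ := by
  have hsum : ∀ c : Fin r → R, ∑ i, residue R (c i) • (maximalIdeal R).toCotangent ⟨x i, hx i⟩ =
      (maximalIdeal R).toCotangent
        ⟨∑ i, c i * x i, sum_mem fun i _ => Ideal.mul_mem_left _ _ (hx i)⟩ := by
    intro c
    have : (⟨∑ i, c i * x i, sum_mem fun i _ => Ideal.mul_mem_left _ _ (hx i)⟩ :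
        maximalIdeal R) = ∑ i, c i • ⟨x i, hx i⟩ := by ext; simp
    rw [this, map_sum]
    refine Finset.sum_congr rfl fun i _ => ?_
    rw [map_smul, ← algebraMap_smul (ResidueField R) (c i)]
    rfl
  rw [Fintype.linearIndependent_iff, IsPartOfMinBasis, ← pow_two]
  refine ⟨fun ⟨_, h⟩ k hk i => ?_, fun h => ⟨hx, fun c hc i => ?_⟩⟩
  · choose c hc using fun i => residue_surjective (k i)
    simp_rw [← hc, hsum, Ideal.toCotangent_eq_zero] at hk
    rw [← hc, residue_eq_zero_iff]
    exact h c hk i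
  · rw [← residue_eq_zero_iff]
    exact h (fun i => residue R (c i)) (by rw [hsum, Ideal.toCotangent_eq_zero]; exact hc) i

theorem isMinBasis_maximalIdeal_iff [IsNoetherianRing R] {r : ℕ} {x : Fin r → R}
    (hx : ∀ i, x i ∈ maximalIdeal R) :
    IsMinBasis (maximalIdeal R) x ↔
      LinearIndependent (ResidueField R)
          (fun i => (maximalIdeal R).toCotangent ⟨x i, hx i⟩) ∧
        span (ResidueField R)
          (Set.range fun i => (maximalIdeal R).toCotangent ⟨x i, hx i⟩) = ⊤ := by
  refine and_congr (isPartOfMinBasis_maximalIdeal_iff hx) ?_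
  rw [Set.range_comp' (maximalIdeal R).toCotangent, CotangentSpace.span_image_eq_top_iff,
    ← (map_injective_of_injective (maximalIdeal R).injective_subtype).eq_iff, map_span,
    Submodule.map_top, range_subtype, ← Set.range_comp]
  rfl

theorem basicallyRegular_iff_finrank_span_range [IsNoetherianRing R] (φ : R →+* S)
    [IsLocalHom φ] :
    BasicallyRegular φ ↔
      Module.finrank (ResidueField S) (span (ResidueField S) (Set.range (cotangentMapₛₗ φ))) =
        edim R := by
  constructor
  · intro hφ
    let b := Module.finBasis (ResidueField R) (CotangentSpace R)
    choose x hx using fun i => Ideal.toCotangent_surjective (maximalIdeal R) (b i)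
    have hxb : (fun i => (maximalIdeal R).toCotangent ⟨x i, (x i).2⟩) = b := funext hx
    have hmin : IsMinBasis (maximalIdeal R) fun i => (x i : R) := by
      rw [isMinBasis_maximalIdeal_iff fun i => (x i).2, hxb]
      exact ⟨b.linearIndependent, b.span_eq⟩
    have hli := (isPartOfMinBasis_maximalIdeal_iff fun i => map_mem_maximalIdeal φ (x i).2).mp
      (hφ _ _ hmin)
    change LinearIndependent _
      (cotangentMapₛₗ φ ∘ fun i => (maximalIdeal R).toCotangent ⟨x i, (x i).2⟩) at hli
    rwa [hxb, LinearMap.linearIndependent_comp_iff_finrank_span_range _ b.span_eq,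
      Fintype.card_fin] at hli
  · intro h r x hmin
    have hx := hmin.1.1
    obtain ⟨hli, hspan⟩ := (isMinBasis_maximalIdeal_iff hx).mp hmin
    rw [isPartOfMinBasis_maximalIdeal_iff fun i => map_mem_maximalIdeal φ (hx i)]
    change LinearIndependent _
      (cotangentMapₛₗ φ ∘ fun i => (maximalIdeal R).toCotangent ⟨x i, hx i⟩)
    rw [LinearMap.linearIndependent_comp_iff_finrank_span_range _ hspan, h, Fintype.card_fin]
    have hr := linearIndependent_iff_card_eq_finrank_span.mp hli
    rwa [Set.finrank, hspan, finrank_top, Fintype.card_fin, eq_comm] at hr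

end LocalRing

/-- Corollary br:cor3. -/
theorem stmt13 (φ : A →+* B) [IsLocalHom φ] (I : Ideal A) [Nontrivial (A ⧸ I)] :
    rd (Ideal.Quotient.mk (I.map φ)) ≤ rd (Ideal.Quotient.mk I) ∧
    (BasicallyRegular φ ↔ ∀ (J : Ideal A) [Nontrivial (A ⧸ J)],
        rd (Ideal.Quotient.mk J) = rd (Ideal.Quotient.mk (J.map φ))) := by
  refine ⟨?_, ?_⟩
  · rw [rd_mk_map_eq, rd_mk_eq_delta, delta_eq_finrank_cotangentImage]
    exact finrank_span_image_le _ _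
  rw [basicallyRegular_iff_finrank_span_range]
  refine ⟨fun h J _ => ?_, fun h => ?_⟩
  · rw [rd_mk_map_eq, rd_mk_eq_delta, delta_eq_finrank_cotangentImage]
    exact (finrank_span_image_eq _ h _).symm
  · have hm := h (maximalIdeal A)
    rw [rd_mk_map_eq, rd_mk_eq_delta, delta_eq_finrank_cotangentImage,
      cotangentImage_maximalIdeal, finrank_top, top_coe, Set.image_univ] at hm
    exact hm.symm
end

section
/- Let φ: (A,m,K) → (B,n,L) and ψ: (B,n,L) → (C,p,M) be local homomorphisms of noetherian local rings, and let ψ_{mB}: B/mB → C/mC be the induced map. Then rd(ψ∘φ) = rd(φ) + rd(ψ) − rd(ψ_{mB}). -/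
open IsLocalRing

variable {A : Type*} [CommRing A] [IsLocalRing A] [IsNoetherianRing A]
variable {B : Type*} [CommRing B] [IsLocalRing B] [IsNoetherianRing B]

variable {C : Type*} [CommRing C] [IsLocalRing C] [IsNoetherianRing C]

/-!
For a local homomorphism `θ : (R, m) → (S, n)`, the image of `L ⊗ m/m²` in `n/n²` is the span of
the image of `mS`, so rank–nullity gives `rd θ + δ_S(mS) = edim R`. For a surjection `π : S → Q`
the map `n/n² → n_Q/n_Q²` is onto with kernel spanned by the image of `ker π`, so
`edim S = δ_S(ker π) + edim Q`. Together, `rd θ = edim R - edim S + edim (S/mS)`. Applied to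
`ψ ∘ φ`, `φ`, `ψ` and `ψ_{mB}`, where `(C/mC)/n(C/mC) ≅ C/nC`, all embedding dimensions cancel.
-/

section

variable {R : Type*} [CommRing R] [IsLocalRing R]
variable {S : Type*} [CommRing S] [IsLocalRing S]
variable {Q : Type*} [CommRing Q] [IsLocalRing Q]

theorem finrank_cotangentSpace_of_surjective (π : S →+* Q) [IsLocalHom π]
    (hπ : Function.Surjective π) :
    letI : Module (ResidueField S) (CotangentSpace Q) := Module.compHom _ (ResidueField.map π)
    Module.finrank (ResidueField S) (CotangentSpace Q) = edim Q := by
  let : Module (ResidueField S) (CotangentSpace Q) := Module.compHom _ (ResidueField.map π)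
  have hbij : Function.Bijective (ResidueField.map π) := by
    refine ⟨RingHom.injective _, fun y => ?_⟩
    obtain ⟨b, rfl⟩ := residue_surjective y
    obtain ⟨a, rfl⟩ := hπ b
    exact ⟨residue S a, ResidueField.map_residue π a⟩
  exact congrArg Cardinal.toNat
    (rank_eq_of_equiv_equiv (ResidueField.map π) (AddEquiv.refl _) hbij fun _ _ => rfl)

theorem cotangentMap_surjective (π : S →+* Q) [IsLocalHom π] (hπ : Function.Surjective π) :
    Function.Surjective (cotangentMap π) := by
  intro w
  obtain ⟨y, rfl⟩ := (maximalIdeal Q).toCotangent_surjective w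
  obtain ⟨x, hx⟩ := hπ y
  have hxm : x ∈ maximalIdeal S := by
    rw [← maximalIdeal_comap π, Ideal.mem_comap, hx]
    exact y.2
  exact ⟨(maximalIdeal S).toCotangent ⟨x, hxm⟩, congrArg _ (Subtype.ext hx)⟩

theorem ker_cotangentMap_of_surjective (π : S →+* Q) [IsLocalHom π]
    (hπ : Function.Surjective π) :
    letI : Module (ResidueField S) (CotangentSpace Q) := Module.compHom _ (ResidueField.map π)
    LinearMap.ker (cotangentMap π) = Submodule.span (ResidueField S)
      ((maximalIdeal S).toCotangent '' {x | (x : S) ∈ RingHom.ker π}) := by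
  refine le_antisymm (fun w hw => ?_) (Submodule.span_le.mpr ?_)
  · obtain ⟨x, rfl⟩ := (maximalIdeal S).toCotangent_surjective w
    have hx : (x : S) ∈ maximalIdeal S ^ 2 ⊔ RingHom.ker π := by
      rw [← Ideal.comap_map_of_surjective' π hπ, Ideal.mem_comap, Ideal.map_pow,
        map_maximalIdeal_of_surjective π hπ]
      exact ((maximalIdeal Q).toCotangent_eq_zero _).mp hw
    obtain ⟨y, hy, z, hz, hyz⟩ := Submodule.mem_sup.mp hx
    have hzm : z ∈ maximalIdeal S :=
      (Ideal.add_mem_iff_right _ (Ideal.pow_le_self two_ne_zero hy)).mp (hyz ▸ x.2)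
    have hxz : (maximalIdeal S).toCotangent x = (maximalIdeal S).toCotangent ⟨z, hzm⟩ := by
      rw [Ideal.toCotangent_eq, ← hyz]
      simpa using hy
    rw [hxz]
    exact Submodule.subset_span ⟨_, hz, rfl⟩
  · rintro _ ⟨x, hx, rfl⟩
    change (maximalIdeal Q).toCotangent ⟨π x, _⟩ = 0
    rw [(maximalIdeal Q).toCotangent_eq_zero]
    change π x ∈ maximalIdeal Q ^ 2
    rw [(RingHom.mem_ker).mp hx]
    exact zero_mem _

theorem edim_eq_delta_ker_add_edim [IsNoetherianRing S] (π : S →+* Q)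
    (hπ : Function.Surjective π) : edim S = delta (RingHom.ker π) + edim Q := by
  have := IsLocalHom.of_surjective π hπ
  let : Module (ResidueField S) (CotangentSpace Q) := Module.compHom _ (ResidueField.map π)
  have h := LinearMap.finrank_range_add_finrank_ker (cotangentMap π)
  rw [LinearMap.range_eq_top.mpr (cotangentMap_surjective π hπ), finrank_top,
    finrank_cotangentSpace_of_surjective π hπ, ker_cotangentMap_of_surjective π hπ] at h
  rw [add_comm] at h
  exact h.symm

theorem span_range_cotangentMap (θ : R →+* S) [IsLocalHom θ] :
    Submodule.span (ResidueField S) (Set.range (cotangentMap θ)) =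
      Submodule.span (ResidueField S)
        ((maximalIdeal S).toCotangent '' {x | (x : S) ∈ (maximalIdeal R).map θ}) := by
  refine le_antisymm (Submodule.span_mono ?_) (Submodule.span_le.mpr ?_)
  · rintro _ ⟨w, rfl⟩
    obtain ⟨a, rfl⟩ := (maximalIdeal R).toCotangent_surjective w
    exact ⟨⟨θ a, map_mem_maximalIdeal θ a.2⟩, Ideal.mem_map_of_mem θ a.2, rfl⟩
  · rintro _ ⟨x, hx, rfl⟩
    -- The elements of `n` whose class lies in the span form an `S`-submodule containing `θ(m)`.
    set V := (Submodule.span (ResidueField S) (Set.range (cotangentMap θ))).restrictScalars S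
    have hmS : (maximalIdeal R).map θ ≤ ((V.comap (maximalIdeal S).toCotangent).map
        (maximalIdeal S).subtype) := by
      refine Ideal.map_le_iff_le_comap.mpr fun a ha => ?_
      exact ⟨⟨θ a, map_mem_maximalIdeal θ ha⟩,
        Submodule.subset_span ⟨(maximalIdeal R).toCotangent ⟨a, ha⟩, rfl⟩, rfl⟩
    obtain ⟨y, hy, hyx⟩ := hmS hx
    rwa [← Subtype.ext hyx]

theorem rd_add_delta_map_maximalIdeal [IsNoetherianRing R] (θ : R →+* S) [IsLocalHom θ] :
    rd θ + delta ((maximalIdeal R).map θ) = edim R := by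
  let : Algebra (ResidueField R) (ResidueField S) := (ResidueField.map θ).toAlgebra
  let : Module (ResidueField R) (CotangentSpace S) := Module.compHom _ (ResidueField.map θ)
  let : IsScalarTower (ResidueField R) (ResidueField S) (CotangentSpace S) :=
    IsScalarTower.of_algebraMap_smul fun _ _ => rfl
  have h := LinearMap.finrank_range_add_finrank_ker
    ((cotangentMap θ).liftBaseChange (ResidueField S))
  rw [Module.finrank_baseChange, LinearMap.range_liftBaseChange, LinearMap.coe_range,
    span_range_cotangentMap] at h
  rw [add_comm]
  exact h

theorem rd_eq_of_surjective_of_ker_eq [IsNoetherianRing R] [IsNoetherianRing S]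
    (θ : R →+* S) [IsLocalHom θ] (π : S →+* Q) (hπ : Function.Surjective π)
    (hker : RingHom.ker π = (maximalIdeal R).map θ) :
    (rd θ : ℤ) = edim R - edim S + edim Q := by
  have hrd := rd_add_delta_map_maximalIdeal θ
  have hS := edim_eq_delta_ker_add_edim π hπ
  rw [hker] at hS
  omega

theorem map_quotientMap_maximalIdeal {T : Type*} [CommRing T] (ψ : S →+* T) {I : Ideal S}
    [Nontrivial (S ⧸ I)] (J : Ideal T) (h : I ≤ J.comap ψ) :
    (maximalIdeal (S ⧸ I)).map (Ideal.quotientMap J ψ h) =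
      ((maximalIdeal S).map ψ).map (Ideal.Quotient.mk J) := by
  rw [← map_maximalIdeal_of_surjective _ Ideal.Quotient.mk_surjective, Ideal.map_map,
    Ideal.quotientMap_comp_mk, Ideal.map_map]

end

/-- Corollary rs:cor4, equality:
`rd(ψ∘φ) = rd(φ) + rd(ψ) − rd(ψ_{mB})`. -/
theorem stmt15 (φ : A →+* B) [IsLocalHom φ] (ψ : B →+* C) [IsLocalHom ψ] :
    (rd (ψ.comp φ) : ℤ) = (rd φ : ℤ) + (rd ψ : ℤ) -
      (rd (Ideal.quotientMap (Ideal.map ψ ((maximalIdeal A).map φ)) ψ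
        Ideal.le_comap_map) : ℤ) := by
  have hle : ((maximalIdeal A).map φ).map ψ ≤ (maximalIdeal B).map ψ :=
    Ideal.map_mono (Ideal.map_le_iff_le_comap.mpr fun _ => map_mem_maximalIdeal φ)
  have hcomp := rd_eq_of_surjective_of_ker_eq (ψ.comp φ)
    (Ideal.Quotient.mk (((maximalIdeal A).map φ).map ψ)) Ideal.Quotient.mk_surjective
    (by rw [Ideal.mk_ker, Ideal.map_map])
  have hφ := rd_eq_of_surjective_of_ker_eq φ (Ideal.Quotient.mk ((maximalIdeal A).map φ))
    Ideal.Quotient.mk_surjective Ideal.mk_ker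
  have hψ := rd_eq_of_surjective_of_ker_eq ψ (Ideal.Quotient.mk ((maximalIdeal B).map ψ))
    Ideal.Quotient.mk_surjective Ideal.mk_ker
  have hfiber := rd_eq_of_surjective_of_ker_eq
    (Ideal.quotientMap (((maximalIdeal A).map φ).map ψ) ψ Ideal.le_comap_map)
    (Ideal.Quotient.factor hle) (Ideal.Quotient.factor_surjective hle)
    ((Ideal.Quotient.factor_ker hle).trans (map_quotientMap_maximalIdeal ψ _ _).symm)
  omega
end

section
/- Let φ: (A,m) → (B,n) and ψ: (B,n) → (C,p) be local homomorphisms of noetherian local rings with φ surjective. Then rd(ψ∘φ) = rd(φ) + rd(ψ). -/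
/-!
Write `K, L, E` for the residue fields and `V_A, V_B, V_C` for the cotangent spaces. The map
`E ⊗_K V_A → V_C` of `ψ ∘ φ` factors as `E ⊗_K V_A ≅ E ⊗_L (L ⊗_K V_A) → E ⊗_L V_B → V_C`, the
last arrow being the map of `ψ` and the middle one the base change of the map of `φ`. As `φ` is
surjective so is `V_A → V_B`, hence the middle arrow is surjective and its kernel has dimension
`dim_K V_A - dim_L V_B = rd φ`. Along a composite whose first factor is surjective, kernel
dimensions add.
-/

open IsLocalRing

open TensorProduct

namespace LinearMap

variable {F M N P : Type*} [Field F] [AddCommGroup M] [Module F M] [AddCommGroup N] [Module F N]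
  [AddCommGroup P] [Module F P] [FiniteDimensional F M]

theorem finrank_ker_add_finrank_of_surjective {f : M →ₗ[F] N} (hf : Function.Surjective f) :
    Module.finrank F (ker f) + Module.finrank F N = Module.finrank F M := by
  rw [← f.finrank_range_add_finrank_ker, range_eq_top.2 hf, finrank_top, add_comm]

theorem finrank_ker_comp_of_surjective {H : M →ₗ[F] N} (hH : Function.Surjective H)
    (G : N →ₗ[F] P) :
    Module.finrank F (ker (G ∘ₗ H)) = Module.finrank F (ker H) + Module.finrank F (ker G) := by
  have : FiniteDimensional F N := Module.Finite.of_surjective H hH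
  have hGH := (G ∘ₗ H).finrank_range_add_finrank_ker
  rw [range_comp_of_range_eq_top _ (range_eq_top.2 hH)] at hGH
  have hG := G.finrank_range_add_finrank_ker
  have hH' := finrank_ker_add_finrank_of_surjective hH
  omega

theorem liftBaseChange_surjective {R A M N : Type*} [CommSemiring R] [CommSemiring A] [Algebra R A]
    [AddCommMonoid M] [Module R M] [AddCommMonoid N] [Module R N] [Module A N]
    [IsScalarTower R A N] {f : M →ₗ[R] N} (hf : Function.Surjective f) :
    Function.Surjective (f.liftBaseChange A) := fun y => by
  obtain ⟨x, rfl⟩ := hf y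
  exact ⟨1 ⊗ₜ x, liftBaseChange_one_tmul A f x⟩

end LinearMap

section Tower

variable {K L E V W U : Type*} [Field K] [Field L] [Field E] [Algebra K L] [Algebra L E]
  [Algebra K E] [IsScalarTower K L E]
  [AddCommGroup V] [Module K V] [FiniteDimensional K V]
  [AddCommGroup W] [Module K W] [Module L W] [IsScalarTower K L W]
  [AddCommGroup U] [Module K U] [Module L U] [Module E U] [IsScalarTower K L U]
  [IsScalarTower L E U] [IsScalarTower K E U]

theorem finrank_ker_liftBaseChange_comp {f : V →ₗ[K] W} (hf : Function.Surjective f)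
    (g : W →ₗ[L] U) :
    Module.finrank E (LinearMap.ker ((g.restrictScalars K ∘ₗ f).liftBaseChange E)) =
      Module.finrank L (LinearMap.ker (f.liftBaseChange L)) +
        Module.finrank E (LinearMap.ker (g.liftBaseChange E)) := by
  set H := (f.liftBaseChange L).baseChange E ∘ₗ
    (AlgebraTensorModule.cancelBaseChange K L E E V).symm.toLinearMap
  have hH : Function.Surjective H :=
    (LinearMap.baseChange_surjective E (LinearMap.liftBaseChange_surjective hf)).comp
      (LinearEquiv.surjective _)
  have hcomp : (g.restrictScalars K ∘ₗ f).liftBaseChange E = g.liftBaseChange E ∘ₗ H := by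
    ext v
    simp [H]
  rw [hcomp, LinearMap.finrank_ker_comp_of_surjective hH]
  congr 1
  have h₁ := LinearMap.finrank_ker_add_finrank_of_surjective hH
  have h₂ := LinearMap.finrank_ker_add_finrank_of_surjective
    (LinearMap.liftBaseChange_surjective (A := L) hf)
  simp only [Module.finrank_baseChange] at h₁ h₂
  omega

end Tower

section Cotangent

variable {A B C : Type*} [CommRing A] [IsLocalRing A] [CommRing B] [IsLocalRing B]
  [CommRing C] [IsLocalRing C] (φ : A →+* B) [IsLocalHom φ]

theorem gmap_toCotangent (m : maximalIdeal A) :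
    gmap φ ((maximalIdeal A).toCotangent m) =
      (maximalIdeal B).toCotangent ⟨φ m, map_mem_maximalIdeal φ m.2⟩ :=
  Ideal.mapCotangent_toCotangent _ _ _ _ m

theorem gmap_comp (ψ : B →+* C) [IsLocalHom ψ] : gmap (ψ.comp φ) = gmap ψ ∘ₗ gmap φ := by
  ext v
  obtain ⟨m, rfl⟩ := Ideal.toCotangent_surjective _ v
  simp only [LinearMap.comp_apply, gmap_toCotangent]
  rfl

theorem gmap_surjective (hφ : Function.Surjective φ) : Function.Surjective (gmap φ) := by
  intro w
  obtain ⟨⟨n, hn⟩, rfl⟩ := Ideal.toCotangent_surjective _ w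
  obtain ⟨a, rfl⟩ := hφ n
  have ha : a ∈ maximalIdeal A := by rwa [← maximalIdeal_comap φ]
  exact ⟨_, gmap_toCotangent φ ⟨a, ha⟩⟩

end Cotangent

variable {A : Type*} [CommRing A] [IsLocalRing A] [IsNoetherianRing A]
variable {B : Type*} [CommRing B] [IsLocalRing B] [IsNoetherianRing B]

variable {C : Type*} [CommRing C] [IsLocalRing C] [IsNoetherianRing C]

/-- Corollary rs:cor5: if `φ` is surjective then
`rd(ψ∘φ) = rd(φ) + rd(ψ)`. -/
theorem stmt16 (φ : A →+* B) [IsLocalHom φ] (ψ : B →+* C) [IsLocalHom ψ]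
    (hφ : Function.Surjective φ) :
    rd (ψ.comp φ) = rd φ + rd ψ := by
  let := (ResidueField.map φ).toAlgebra
  let := (ResidueField.map ψ).toAlgebra
  let := (ResidueField.map (ψ.comp φ)).toAlgebra
  let : Module (ResidueField A) (CotangentSpace B) := .compHom _ (ResidueField.map φ)
  let : Module (ResidueField B) (CotangentSpace C) := .compHom _ (ResidueField.map ψ)
  let : Module (ResidueField A) (CotangentSpace C) := .compHom _ (ResidueField.map (ψ.comp φ))
  have : IsScalarTower (ResidueField A) (ResidueField B) (ResidueField C) :=
    .of_algebraMap_eq fun x => (ResidueField.map_map φ ψ x).symm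
  have : IsScalarTower (ResidueField A) (ResidueField B) (CotangentSpace B) :=
    .of_algebraMap_smul fun _ _ => rfl
  have : IsScalarTower (ResidueField A) (ResidueField B) (CotangentSpace C) :=
    .of_algebraMap_smul fun x v => congrArg (· • v) (ResidueField.map_map φ ψ x)
  have : IsScalarTower (ResidueField B) (ResidueField C) (CotangentSpace C) :=
    .of_algebraMap_smul fun _ _ => rfl
  have : IsScalarTower (ResidueField A) (ResidueField C) (CotangentSpace C) :=
    .of_algebraMap_smul fun _ _ => rfl
  have hcomp : cotangentMap (ψ.comp φ) = (cotangentMap ψ).restrictScalars _ ∘ₗ cotangentMap φ :=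
    LinearMap.ext fun v => LinearMap.congr_fun (gmap_comp φ ψ) v
  have key := finrank_ker_liftBaseChange_comp (E := ResidueField C)
    (f := cotangentMap φ) (gmap_surjective φ hφ) (cotangentMap ψ)
  rwa [← hcomp] at key
end
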